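/- With N_k defined as in the recurrence N_2 = d_{2,1} - 1 and N_k = (d_{k,1} - 1) - Σ_{j=2}^{k-1} N_j d_{k,j} (where d_{k,s} comes from the change of basis (ξ^k + ξ^{-k} - 2) = Σ_s d_{k,s}(ξ+ξ^{-1}-2)^s), for every prime p > k with 2 ≤ k ≤ 6 one has ν_p(N_k) = ⌊2(k-1)/(p-1)⌋. -/

import Mathlib

open LaurentPolynomial Finset

/-- `bCoef r s` is the coefficient of `ξ^s + ξ^{-s}` (constant term when `s = 0`) in
`(ξ + ξ⁻¹ - 2)^r ∈ ℤ[ξ, ξ⁻¹]`. -/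
noncomputable def bCoef (r s : ℕ) : ℤ :=
  ((T 1 + T (-1) - 2 : LaurentPolynomial ℤ) ^ r).coeff (s : ℤ)

/-- `dCoef n s` is defined by `dCoef n n = 1` and, downward for `s < n`,
`dCoef n s = -(∑_{j=s+1}^{n} dCoef n j * bCoef j s)`. -/
noncomputable def dCoef (n : ℕ) : ℕ → ℤ
  | s =>
    if n ≤ s then 1
    else -(∑ j ∈ (Finset.Ioc s n).attach, dCoef n j.1 * bCoef j.1 s)
  termination_by s => n - s
  decreasing_by
    have := Finset.mem_Ioc.mp j.2
    omega

/-- `N_2 = d_{2,1} - 1` and `N_k = (d_{k,1} - 1) - ∑_{j=2}^{k-1} N_j d_{k,j}` for `k ≥ 3`. -/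
noncomputable def NSeq : ℕ → ℤ
  | k =>
    if k ≤ 1 then 0
    else (dCoef k 1 - 1) - ∑ j ∈ (Finset.Ioo 1 k).attach, NSeq j.1 * dCoef k j.1
  termination_by k => k
  decreasing_by
    have := Finset.mem_Ioo.mp j.2
    omega

open Polynomial

lemma bCoef_eq (r s : ℕ) : bCoef r s = (-1)^(r+s) * ((2*r).choose (r+s)) := by
  have key : (T 1 + T (-1) - 2 : LaurentPolynomial ℤ) = T (-1) * (T 1 - 1)^2 := by
    have h2 : (T 1 - 1 : LaurentPolynomial ℤ)^2 = T 2 - 2 * T 1 + 1 := by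
      rw [sub_sq]; simp [T_pow]
    rw [h2, mul_add, mul_sub, ← T_add, ← mul_assoc,
      mul_comm (T (-1) : LaurentPolynomial ℤ) 2, mul_assoc, ← T_add]
    norm_num; ring
  have h1 : ((T 1 + T (-1) - 2 : LaurentPolynomial ℤ))^r
      = T (-(r:ℤ)) * Polynomial.toLaurent ((X + Polynomial.C (-1:ℤ))^(2*r)) := by
    rw [key, mul_pow, ← pow_mul, T_pow, map_pow, map_add, Polynomial.toLaurent_X,
      Polynomial.toLaurent_C]
    norm_num
    rw [sub_eq_add_neg]; exact Or.inl rfl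
  unfold bCoef
  rw [h1]
  rw [show (T (-(r:ℤ)) : LaurentPolynomial ℤ) = AddMonoidAlgebra.single (-(r:ℤ)) 1 from rfl]
  rw [AddMonoidAlgebra.coeff_single_mul_apply]
  rw [LaurentPolynomial.coeff_toLaurent]
  rw [show (-(-(r:ℤ)) + (s:ℤ)) = ((r + s : ℕ) : ℤ) by push_cast; ring]
  rw [show ((r+s:ℕ):ℤ) = Nat.castEmbedding (r+s) from rfl, Finsupp.mapDomain_apply Nat.castEmbedding.injective]
  have hc : (((X + Polynomial.C (-1:ℤ))^(2*r)).toFinsupp.coeff (r+s))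
      = ((X + Polynomial.C (-1:ℤ))^(2*r)).coeff (r+s) := rfl
  rw [hc, Polynomial.coeff_X_add_C_pow]
  rcases le_or_gt (r+s) (2*r) with h | h
  · have hpar : Even (2*r-(r+s)) ↔ Even (r+s) := by
      rw [Nat.even_iff, Nat.even_iff]; omega
    rcases Nat.even_or_odd (r+s) with he | ho
    · rw [one_mul, he.neg_one_pow, (hpar.mpr he).neg_one_pow]
    · rw [one_mul, ho.neg_one_pow, (Nat.odd_iff.mpr (by
        rw [Nat.odd_iff] at ho; omega : (2*r-(r+s)) % 2 = 1)).neg_one_pow]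
  · rw [Nat.choose_eq_zero_of_lt h]; ring

lemma dCoef_self (n : ℕ) : dCoef n n = 1 := by rw [dCoef, if_pos le_rfl]

lemma dCoef_eq {n s : ℕ} (h : s < n) :
    dCoef n s = -(∑ j ∈ Finset.Ioc s n, dCoef n j * bCoef j s) := by
  rw [dCoef, if_neg (by omega)]
  congr 1
  exact Finset.sum_attach (Finset.Ioc s n) (fun j => dCoef n j * bCoef j s)

lemma NSeq_eq {k : ℕ} (h : 2 ≤ k) :
    NSeq k = (dCoef k 1 - 1) - ∑ j ∈ Finset.Ioo 1 k, NSeq j * dCoef k j := by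
  rw [NSeq, if_neg (by omega)]
  congr 1
  exact Finset.sum_attach (Finset.Ioo 1 k) (fun j => NSeq j * dCoef k j)

lemma dval_2_1 : dCoef 2 1 = 4 := by
  rw [dCoef_eq (by norm_num), show Finset.Ioc 1 2 = ({2} : Finset ℕ) from rfl]
  simp [Finset.sum_insert, dCoef_self,  bCoef_eq]
  all_goals norm_num [Nat.choose]

lemma dval_3_2 : dCoef 3 2 = 6 := by
  rw [dCoef_eq (by norm_num), show Finset.Ioc 2 3 = ({3} : Finset ℕ) from rfl]
  simp [Finset.sum_insert, dCoef_self,  bCoef_eq]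
  all_goals norm_num [Nat.choose]

lemma dval_3_1 : dCoef 3 1 = 9 := by
  rw [dCoef_eq (by norm_num), show Finset.Ioc 1 3 = ({2,3} : Finset ℕ) from rfl]
  simp [Finset.sum_insert, dCoef_self, dval_3_2, bCoef_eq]
  all_goals norm_num [Nat.choose]

lemma dval_4_3 : dCoef 4 3 = 8 := by
  rw [dCoef_eq (by norm_num), show Finset.Ioc 3 4 = ({4} : Finset ℕ) from rfl]
  simp [Finset.sum_insert, dCoef_self,  bCoef_eq]
  all_goals norm_num [Nat.choose]

lemma dval_4_2 : dCoef 4 2 = 20 := by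
  rw [dCoef_eq (by norm_num), show Finset.Ioc 2 4 = ({3,4} : Finset ℕ) from rfl]
  simp [Finset.sum_insert, dCoef_self, dval_4_3, bCoef_eq]
  all_goals norm_num [Nat.choose]

lemma dval_4_1 : dCoef 4 1 = 16 := by
  rw [dCoef_eq (by norm_num), show Finset.Ioc 1 4 = ({2,3,4} : Finset ℕ) from rfl]
  simp [Finset.sum_insert, dCoef_self, dval_4_2, dval_4_3, bCoef_eq]
  all_goals norm_num [Nat.choose]

lemma dval_5_4 : dCoef 5 4 = 10 := by
  rw [dCoef_eq (by norm_num), show Finset.Ioc 4 5 = ({5} : Finset ℕ) from rfl]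
  simp [Finset.sum_insert, dCoef_self,  bCoef_eq]
  all_goals norm_num [Nat.choose]

lemma dval_5_3 : dCoef 5 3 = 35 := by
  rw [dCoef_eq (by norm_num), show Finset.Ioc 3 5 = ({4,5} : Finset ℕ) from rfl]
  simp [Finset.sum_insert, dCoef_self, dval_5_4, bCoef_eq]
  all_goals norm_num [Nat.choose]

lemma dval_5_2 : dCoef 5 2 = 50 := by
  rw [dCoef_eq (by norm_num), show Finset.Ioc 2 5 = ({3,4,5} : Finset ℕ) from rfl]
  simp [Finset.sum_insert, dCoef_self, dval_5_3, dval_5_4, bCoef_eq]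
  all_goals norm_num [Nat.choose]

lemma dval_5_1 : dCoef 5 1 = 25 := by
  rw [dCoef_eq (by norm_num), show Finset.Ioc 1 5 = ({2,3,4,5} : Finset ℕ) from rfl]
  simp [Finset.sum_insert, dCoef_self, dval_5_2, dval_5_3, dval_5_4, bCoef_eq]
  all_goals norm_num [Nat.choose]

lemma dval_6_5 : dCoef 6 5 = 12 := by
  rw [dCoef_eq (by norm_num), show Finset.Ioc 5 6 = ({6} : Finset ℕ) from rfl]
  simp [Finset.sum_insert, dCoef_self,  bCoef_eq]
  all_goals norm_num [Nat.choose]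

lemma dval_6_4 : dCoef 6 4 = 54 := by
  rw [dCoef_eq (by norm_num), show Finset.Ioc 4 6 = ({5,6} : Finset ℕ) from rfl]
  simp [Finset.sum_insert, dCoef_self, dval_6_5, bCoef_eq]
  all_goals norm_num [Nat.choose]

lemma dval_6_3 : dCoef 6 3 = 112 := by
  rw [dCoef_eq (by norm_num), show Finset.Ioc 3 6 = ({4,5,6} : Finset ℕ) from rfl]
  simp [Finset.sum_insert, dCoef_self, dval_6_4, dval_6_5, bCoef_eq]
  all_goals norm_num [Nat.choose]

lemma dval_6_2 : dCoef 6 2 = 105 := by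
  rw [dCoef_eq (by norm_num), show Finset.Ioc 2 6 = ({3,4,5,6} : Finset ℕ) from rfl]
  simp [Finset.sum_insert, dCoef_self, dval_6_3, dval_6_4, dval_6_5, bCoef_eq]
  all_goals norm_num [Nat.choose]

lemma dval_6_1 : dCoef 6 1 = 36 := by
  rw [dCoef_eq (by norm_num), show Finset.Ioc 1 6 = ({2,3,4,5,6} : Finset ℕ) from rfl]
  simp [Finset.sum_insert, dCoef_self, dval_6_2, dval_6_3, dval_6_4, dval_6_5, bCoef_eq]
  all_goals norm_num [Nat.choose]

lemma Nval_2 : NSeq 2 = 3 := by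
  rw [NSeq_eq (by norm_num), show Finset.Ioo 1 2 = (∅ : Finset ℕ) from rfl]
  simp [Finset.sum_insert, dval_2_1]

lemma Nval_3 : NSeq 3 = -10 := by
  rw [NSeq_eq (by norm_num), show Finset.Ioo 1 3 = ({2} : Finset ℕ) from rfl]
  simp [Finset.sum_insert, dval_3_1, dval_3_2, Nval_2]

lemma Nval_4 : NSeq 4 = 35 := by
  rw [NSeq_eq (by norm_num), show Finset.Ioo 1 4 = ({2,3} : Finset ℕ) from rfl]
  simp [Finset.sum_insert, dval_4_1, dval_4_2, dval_4_3, Nval_2, Nval_3]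

lemma Nval_5 : NSeq 5 = -126 := by
  rw [NSeq_eq (by norm_num), show Finset.Ioo 1 5 = ({2,3,4} : Finset ℕ) from rfl]
  simp [Finset.sum_insert, dval_5_1, dval_5_2, dval_5_3, dval_5_4, Nval_2, Nval_3, Nval_4]

lemma Nval_6 : NSeq 6 = 462 := by
  rw [NSeq_eq (by norm_num), show Finset.Ioo 1 6 = ({2,3,4,5} : Finset ℕ) from rfl]
  simp [Finset.sum_insert, dval_6_1, dval_6_2, dval_6_3, dval_6_4, dval_6_5, Nval_2, Nval_3, Nval_4, Nval_5]
lemma pval1 {p : ℕ} (hp : p.Prime) (m : ℕ) (hm : ¬ p ∣ m) (hm0 : m ≠ 0) :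
    padicValNat p (p * m) = 1 := by
  haveI := Fact.mk hp
  rw [padicValNat.mul hp.ne_zero hm0, padicValNat.self hp.one_lt,
    padicValNat.eq_zero_of_not_dvd hm]

lemma nd_lt {p A : ℕ} (hA : 0 < A) (h : A < p) : ¬ p ∣ A :=
  fun hd => absurd (Nat.le_of_dvd hA hd) (by omega)

lemma nd_mul {p a b : ℕ} (hp : p.Prime) (ha : ¬ p ∣ a) (hb : ¬ p ∣ b) : ¬ p ∣ a * b :=
  fun h => ((Nat.Prime.dvd_mul hp).mp h).elim ha hb


/-- For every prime `p > k` with `2 ≤ k ≤ 6`, `ν_p(N_k) = ⌊2(k-1)/(p-1)⌋`. -/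
theorem stmt_15 (p k : ℕ) (hp : p.Prime) (hk2 : 2 ≤ k) (hk6 : k ≤ 6) (hpk : k < p) :
    padicValInt p (NSeq k) = 2 * (k - 1) / (p - 1) := by
  have hne : ∀ n : ℕ, ¬ Nat.Prime n → p ≠ n := fun n hn he => hn (he ▸ hp)
  have h4 := hne 4 (by norm_num)
  have h6 := hne 6 (by norm_num)
  have h8 := hne 8 (by norm_num)
  have h9 := hne 9 (by norm_num)
  have h10 := hne 10 (by norm_num)
  have h12 := hne 12 (by norm_num)
  interval_cases k
  · rw [Nval_2]; unfold padicValInt; norm_num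
    by_cases h3 : p = 3
    · subst h3; rw [show (3:ℕ) = 3*1 by norm_num, pval1 hp 1 (by norm_num) one_ne_zero]
    · have : 5 ≤ p := by omega
      rw [padicValNat.eq_zero_of_not_dvd (nd_lt (by norm_num) (by omega)), Nat.div_eq_of_lt (by omega)]
  · rw [Nval_3]; unfold padicValInt; norm_num
    by_cases h5 : p = 5
    · subst h5; rw [show (10:ℕ) = 5*2 by norm_num, pval1 hp 2 (by norm_num) (by norm_num)]
    · have : 7 ≤ p := by omega
      rw [padicValNat.eq_zero_of_not_dvd ((show (10:ℕ)=2*5 by norm_num) ▸ nd_mul hp (nd_lt (by norm_num) (by omega)) (nd_lt (by norm_num) (by omega))), Nat.div_eq_of_lt (by omega)]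
  · rw [Nval_4]; unfold padicValInt; norm_num
    by_cases h5 : p = 5
    · subst h5; rw [show (35:ℕ) = 5*7 by norm_num, pval1 hp 7 (by norm_num) (by norm_num)]
    by_cases h7 : p = 7
    · subst h7; rw [show (35:ℕ) = 7*5 by norm_num, pval1 hp 5 (by norm_num) (by norm_num)]
    · have : 11 ≤ p := by omega
      rw [padicValNat.eq_zero_of_not_dvd ((show (35:ℕ)=5*7 by norm_num) ▸ nd_mul hp (nd_lt (by norm_num) (by omega)) (nd_lt (by norm_num) (by omega))), Nat.div_eq_of_lt (by omega)]
  · rw [Nval_5]; unfold padicValInt; norm_num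
    by_cases h7 : p = 7
    · subst h7; rw [show (126:ℕ) = 7*18 by norm_num, pval1 hp 18 (by norm_num) (by norm_num)]
    · have : 11 ≤ p := by omega
      rw [padicValNat.eq_zero_of_not_dvd ((show (126:ℕ)=2*(9*7) by norm_num) ▸ nd_mul hp (nd_lt (by norm_num) (by omega)) (nd_mul hp (nd_lt (by norm_num) (by omega)) (nd_lt (by norm_num) (by omega)))), Nat.div_eq_of_lt (by omega)]
  · rw [Nval_6]; unfold padicValInt; norm_num
    by_cases h7 : p = 7
    · subst h7; rw [show (462:ℕ) = 7*66 by norm_num, pval1 hp 66 (by norm_num) (by norm_num)]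
    by_cases h11 : p = 11
    · subst h11; rw [show (462:ℕ) = 11*42 by norm_num, pval1 hp 42 (by norm_num) (by norm_num)]
    · have : 13 ≤ p := by omega
      rw [padicValNat.eq_zero_of_not_dvd ((show (462:ℕ)=6*(7*11) by norm_num) ▸ nd_mul hp (nd_lt (by norm_num) (by omega)) (nd_mul hp (nd_lt (by norm_num) (by omega)) (nd_lt (by norm_num) (by omega)))), Nat.div_eq_of_lt (by omega)]
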